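/- Effects of residuation on conflict: let C = ⟨E, X⟩ be a stable configuration structure over a countable set E, x ∈ X a finite configuration, and σ_x : Pr(C) → Pr(x⊙C) the residuation map. For all distinct complete primes p, q ∈ Pr(C) that are incompatible in C (have no least upper bound): (i) if p ⊆ x then σ_x(p) ⊆ σ_x(q); (ii) if p ⊄ x and q ⊄ x then σ_x(p) and σ_x(q) are incompatible in x⊙C. -/
import Mathlib


/-- A configuration structure over `E` is a set `X` of subsets of `E` (its configurations).
    It is rooted when `∅ ∈ X`. -/
def Rooted {E : Type*} (X : Set (Set E)) : Prop := ∅ ∈ X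

/-- Connectedness (restricted to finite configurations). -/
def ConnectedCS {E : Type*} (X : Set (Set E)) : Prop :=
  ∀ x ∈ X, x.Finite → x ≠ ∅ → ∃ a ∈ x, x \ {a} ∈ X

/-- Closure under bounded unions. -/
def ClosedBU {E : Type*} (X : Set (Set E)) : Prop :=
  ∀ x ∈ X, ∀ y ∈ X, ∀ z ∈ X, x ∪ y ⊆ z → x ∪ y ∈ X

/-- Closure under (binary) intersections. -/
def ClosedInter {E : Type*} (X : Set (Set E)) : Prop :=
  ∀ x ∈ X, ∀ y ∈ X, x ∩ y ∈ X

/-- Coherence of a configuration structure. -/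
def CoherentCS {E : Type*} (X : Set (Set E)) : Prop :=
  ∀ x ∈ X, ∀ y ∈ X, ∀ z ∈ X,
    (∃ z' ∈ X, x ∪ y ⊆ z') → (∃ z'' ∈ X, y ∪ z ⊆ z'') → (∃ z''' ∈ X, x ∪ z ⊆ z''') →
    x ∪ y ∪ z ∈ X

/-- Stability of a configuration structure. -/
def StableCS {E : Type*} (X : Set (Set E)) : Prop :=
  Rooted X ∧ ConnectedCS X ∧ ClosedBU X ∧ ClosedInter X ∧ CoherentCS X

/-- The residual `x·C`: configurations `y \ x` for `y ∈ X` with `x ⊆ y`. -/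
def res {E : Type*} (x : Set E) (X : Set (Set E)) : Set (Set E) :=
  {z | ∃ y ∈ X, x ⊆ y ∧ z = y \ x}

/-- The symmetric residual `x⊙C`: configurations `y ∆ x` for `y ∈ X`. -/
def symres {E : Type*} (x : Set E) (X : Set (Set E)) : Set (Set E) :=
  {z | ∃ y ∈ X, z = symmDiff y x}

/-- `s` is the least upper bound of `Y` in the partial order `(X, ⊆)`. -/
def IsLubIn {E : Type*} (X Y : Set (Set E)) (s : Set E) : Prop :=
  s ∈ X ∧ (∀ y ∈ Y, y ⊆ s) ∧ ∀ t ∈ X, (∀ y ∈ Y, y ⊆ t) → s ⊆ t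

/-- `Y` is consistent in `(X, ⊆)`: it has a least upper bound in `X`. -/
def ConsistentIn {E : Type*} (X Y : Set (Set E)) : Prop := ∃ s, IsLubIn X Y s

/-- `Y` is pairwise consistent in `(X, ⊆)`. -/
def PairwiseConsistentIn {E : Type*} (X Y : Set (Set E)) : Prop :=
  Y.Nonempty ∧ ∀ a ∈ Y, ∀ b ∈ Y, a ≠ b → ConsistentIn X {a, b}

/-- `Y` is directed in `(X, ⊆)`: nonempty and its lub exists and belongs to `Y`. -/
def DirectedIn {E : Type*} (X Y : Set (Set E)) : Prop :=
  Y.Nonempty ∧ ∃ s ∈ Y, IsLubIn X Y s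

/-- Two configurations are compatible when `{u, v}` has a least upper bound in `(X, ⊆)`. -/
def Compatible {E : Type*} (X : Set (Set E)) (u v : Set E) : Prop :=
  ConsistentIn X {u, v}

/-- Orthogonality: compatible and inclusion-incomparable. -/
def Orthogonal {E : Type*} (X : Set (Set E)) (u v : Set E) : Prop :=
  Compatible X u v ∧ ¬ u ⊆ v ∧ ¬ v ⊆ u

/-- `x` is a compact element of `(X, ⊆)`. -/
def CompactIn {E : Type*} (X : Set (Set E)) (x : Set E) : Prop :=
  x ∈ X ∧ ∀ Y ⊆ X, DirectedIn X Y → ∀ s, IsLubIn X Y s → x ⊆ s → ∃ y ∈ Y, x ⊆ y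

/-- `p` is a complete prime of `(X, ⊆)`. -/
def CompletePrimeIn {E : Type*} (X : Set (Set E)) (p : Set E) : Prop :=
  p ∈ X ∧ ∀ Y ⊆ X, PairwiseConsistentIn X Y → ∀ s, IsLubIn X Y s → p ⊆ s → ∃ y ∈ Y, p ⊆ y

/-- `y` is an immediate predecessor of `p` in `(X, ⊆)`:
    a maximal element of `{z ∈ X | z ⊊ p}`. -/
def IsMaxPred {E : Type*} (X : Set (Set E)) (p y : Set E) : Prop :=
  y ∈ X ∧ y ⊂ p ∧ ∀ z ∈ X, z ⊂ p → y ⊆ z → z = y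

/-- The complete prime `p` introduces event `a` in `C = ⟨E, X⟩`:
    `p \ pred(p) = {a}` for an immediate predecessor `pred(p)` of `p`
    (i.e. the derivative `δ_C(p)` of `p` is `a`). -/
def IntroducesIn {E : Type*} (X : Set (Set E)) (p : Set E) (a : E) : Prop :=
  CompletePrimeIn X p ∧ ∃ y, IsMaxPred X p y ∧ p \ y = {a}

/-- `p'` is the image of `p` under the residuation map `σ : Pr(C) → Pr(C')`,
    i.e. `p` and `p'` introduce the same event (`δ_{C'}(p') = δ_C(p)`). -/
def SameIntro {E : Type*} (X X' : Set (Set E)) (p p' : Set E) : Prop :=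
  ∃ a, IntroducesIn X p a ∧ IntroducesIn X' p' a

/-- `↓x_C`: the complete primes of `C` included in `x`. -/
def downPr {E : Type*} (X : Set (Set E)) (x : Set E) : Set (Set E) :=
  {p | CompletePrimeIn X p ∧ p ⊆ x}

/-- Causality relation of the switch `↓x_C ⊙ E(C)`. -/
def ltSwitch {E : Type*} (X : Set (Set E)) (x : Set E) (p q : Set E) : Prop :=
  (p ⊆ q ∧ p ∉ downPr X x ∧ q ∉ downPr X x) ∨
  (q ⊆ p ∧ p ∈ downPr X x ∧ q ∈ downPr X x) ∨
  (¬ Compatible X p q ∧ p ∈ downPr X x)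

/-- Conflict relation of the switch `↓x_C ⊙ E(C)`. -/
def cfSwitch {E : Type*} (X : Set (Set E)) (x : Set E) (p q : Set E) : Prop :=
  (¬ Compatible X p q ∧ p ∉ downPr X x ∧ q ∉ downPr X x) ∨
  (p ⊆ q ∧ p ∈ downPr X x ∧ q ∉ downPr X x)

/-- If the union of two configurations is itself a configuration, it is their lub. -/
lemma isLubIn_union {E : Type*} {X : Set (Set E)} {u v : Set E} (huv : u ∪ v ∈ X) :
    IsLubIn X {u, v} (u ∪ v) := by
  refine ⟨huv, ?_, ?_⟩
  · rintro y (rfl | rfl)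
    · exact Set.subset_union_left
    · exact Set.subset_union_right
  · intro t ht hy
    exact Set.union_subset (hy u (by simp)) (hy v (by simp))

/-- Two configurations with a common upper bound are compatible (using `ClosedBU`). -/
lemma compatible_of_bound {E : Type*} {X : Set (Set E)} (hBU : ClosedBU X)
    {u v z : Set E} (hu : u ∈ X) (hv : v ∈ X) (hz : z ∈ X) (h : u ∪ v ⊆ z) :
    Compatible X u v :=
  ⟨u ∪ v, isLubIn_union (hBU u hu v hv z hz h)⟩

/-- A complete prime `p` introducing `a` is a minimum among its subconfigurations
    containing `a`. -/
lemma prime_min {E : Type*} {X : Set (Set E)} {p y t : Set E} {a : E}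
    (hp : CompletePrimeIn X p) (hy : IsMaxPred X p y) (hd : p \ y = {a})
    (ht : t ∈ X) (htp : t ⊆ p) (hat : a ∈ t) : p ⊆ t := by
  have hap : a ∈ p \ y := hd ▸ rfl
  have hyp : y ⊆ p := hy.2.1.subset
  have hpyt : p ⊆ y ∪ t := by
    intro e he
    by_cases hey : e ∈ y
    · exact Or.inl hey
    · have : e ∈ p \ y := ⟨he, hey⟩
      rw [hd] at this
      exact Or.inr (this ▸ hat)
  have hlub : IsLubIn X {t, y} p := by
    refine ⟨hp.1, ?_, ?_⟩
    · rintro z (rfl | rfl)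
      · exact htp
      · exact hyp
    · intro t' ht' h'
      exact hpyt.trans (Set.union_subset (h' y (by simp)) (h' t (by simp)))
  have hpc : PairwiseConsistentIn X {t, y} := by
    refine ⟨⟨t, by simp⟩, ?_⟩
    intro u hu v hv hne
    have hpair : ({u, v} : Set (Set E)) = {t, y} := by
      rcases hu with rfl | hu
      · rcases hv with rfl | hv
        · exact absurd rfl hne
        · simp at hv; subst hv; rfl
      · simp at hu; subst hu
        rcases hv with rfl | hv
        · exact Set.pair_comm _ _
        · simp at hv; subst hv; exact absurd rfl hne
    exact ⟨p, hpair ▸ hlub⟩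
  obtain ⟨y0, hy0, hpy0⟩ := hp.2 {t, y}
    (by
      rintro z (rfl | hz)
      · exact ht
      · simp only [Set.mem_singleton_iff] at hz
        subst hz
        exact hy.1)
    hpc p hlub subset_rfl
  rcases hy0 with rfl | hy0
  · exact hpy0
  · simp at hy0; subst hy0
    exact absurd (hpy0 hap.1) hap.2

/-- The prime cause: a complete prime introducing `a` is contained in every
    configuration containing `a` (needs closure under intersections). -/
lemma prime_cause {E : Type*} {X : Set (Set E)} (hInt : ClosedInter X)
    {p z : Set E} {a : E} (hpa : IntroducesIn X p a) (hz : z ∈ X) (haz : a ∈ z) :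
    p ⊆ z := by
  obtain ⟨hp, y, hy, hd⟩ := hpa
  have hap : a ∈ p := by
    have : a ∈ p \ y := hd ▸ rfl
    exact this.1
  have := prime_min hp hy hd (hInt z hz p hp.1) Set.inter_subset_right ⟨haz, hap⟩
  exact this.trans Set.inter_subset_left

/-- The symmetric residual of a stable structure is closed under intersections. -/
lemma symres_closedInter {E : Type*} {X : Set (Set E)} (hInt : ClosedInter X)
    (hcoh : CoherentCS X) {x : Set E} (hx : x ∈ X) : ClosedInter (symres x X) := by
  intro u hu v hv
  obtain ⟨Y1, hY1, rfl⟩ := hu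
  obtain ⟨Y2, hY2, rfl⟩ := hv
  refine ⟨(Y1 ∩ Y2) ∪ (Y1 ∩ x) ∪ (Y2 ∩ x), ?_, ?_⟩
  · apply hcoh _ (hInt _ hY1 _ hY2) _ (hInt _ hY1 _ hx) _ (hInt _ hY2 _ hx)
    · exact ⟨Y1, hY1, Set.union_subset Set.inter_subset_left Set.inter_subset_left⟩
    · exact ⟨x, hx, Set.union_subset Set.inter_subset_right Set.inter_subset_right⟩
    · exact ⟨Y2, hY2, Set.union_subset Set.inter_subset_right Set.inter_subset_left⟩
  · ext e
    by_cases hex : e ∈ x <;> simp [Set.mem_symmDiff, hex] <;> tauto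

/-- Effects of residuation on conflict: for distinct incompatible
    complete primes `p, q` of a stable `C`, (i) if `p ⊆ x` then
    `σ_x(p) ⊆ σ_x(q)`; (ii) if `p ⊄ x` and `q ⊄ x` then `σ_x(p)` and `σ_x(q)`
    are incompatible in `x⊙C`. -/
theorem residuation_effect_on_conflict {E : Type*} [Countable E]
    (X : Set (Set E)) (hX : StableCS X) (x : Set E) (hx : x ∈ X) (hxfin : x.Finite)
    (p q : Set E) (hp : CompletePrimeIn X p) (hq : CompletePrimeIn X q)
    (hne : p ≠ q) (hincomp : ¬ Compatible X p q) :
    ∀ p' q', SameIntro X (symres x X) p p' → SameIntro X (symres x X) q q' →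
      (p ⊆ x → p' ⊆ q') ∧
      ((¬ p ⊆ x ∧ ¬ q ⊆ x) → ¬ Compatible (symres x X) p' q') := by
  obtain ⟨hroot, hconn, hBU, hInt, hcoh⟩ := hX
  have hDint : ClosedInter (symres x X) := symres_closedInter hInt hcoh hx
  intro p' q' hpp' hqq'
  obtain ⟨a, hpa, hp'a⟩ := hpp'
  obtain ⟨b, hqb, hq'b⟩ := hqq'
  -- unpack
  obtain ⟨hpP, yp, hyp, hdp⟩ := hpa
  have hap : a ∈ p := by have : a ∈ p \ yp := hdp ▸ rfl; exact this.1
  obtain ⟨hqP, yq, hyq, hdq⟩ := hqb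
  have hbq : b ∈ q := by have : b ∈ q \ yq := hdq ▸ rfl; exact this.1
  obtain ⟨hp'P, yp', hyp', hdp'⟩ := hp'a
  have hap' : a ∈ p' := by have : a ∈ p' \ yp' := hdp' ▸ rfl; exact this.1
  obtain ⟨hq'P, yq', hyq', hdq'⟩ := hq'b
  have hbq' : b ∈ q' := by have : b ∈ q' \ yq' := hdq' ▸ rfl; exact this.1
  -- incompatibility: no common upper bound in X
  have noub : ∀ z ∈ X, ¬ (p ⊆ z ∧ q ⊆ z) := by
    rintro z hz ⟨h1, h2⟩
    exact hincomp (compatible_of_bound hBU hpP.1 hqP.1 hz (Set.union_subset h1 h2))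
  constructor
  · -- part (i)
    intro hpx
    have hax : a ∈ x := hpx hap
    obtain ⟨Q, hQX, hq'eq⟩ := hq'P.1
    have haq' : a ∈ q' := by
      by_contra haq'
      have haQ : a ∈ Q := by
        by_contra haQ
        exact haq' (hq'eq ▸ Set.mem_symmDiff.2 (Or.inr ⟨hax, haQ⟩))
      have hpQ : p ⊆ Q := prime_cause hInt ⟨hpP, yp, hyp, hdp⟩ hQX haQ
      by_cases hbQ : b ∈ Q
      · exact noub Q hQX ⟨hpQ, prime_cause hInt ⟨hqP, yq, hyq, hdq⟩ hQX hbQ⟩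
      · have hbx : b ∈ x := by
          rcases Set.mem_symmDiff.1 (hq'eq ▸ hbq') with ⟨h1, _⟩ | ⟨h1, _⟩
          · exact absurd h1 hbQ
          · exact h1
        -- the predecessor of q' is q' \ {b}; its corresponding configuration is Q ∪ {b}
        obtain ⟨Z, hZX, hZeq⟩ := hyq'.1
        have hyq'sub : yq' ⊆ q' := hyq'.2.1.subset
        have hbyq' : b ∉ yq' := by
          have : b ∈ q' \ yq' := hdq' ▸ rfl
          exact this.2
        have hy'eq : yq' = q' \ {b} := by
          ext e
          constructor
          · intro he
            refine ⟨hyq'sub he, ?_⟩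
            simp only [Set.mem_singleton_iff]
            rintro rfl; exact hbyq' he
          · rintro ⟨he, heb⟩
            by_contra hey
            have : e ∈ q' \ yq' := ⟨he, hey⟩
            rw [hdq'] at this
            exact heb this
        have hZQ : Z = Q ∪ {b} := by
          have h1 : symmDiff Z x = (symmDiff Q x) \ {b} := by
            rw [← hZeq, hy'eq, hq'eq]
          ext e
          have h2 := Set.ext_iff.1 h1 e
          by_cases heb : e = b
          · subst heb
            simp [Set.mem_symmDiff, hbx, hbQ] at h2 ⊢
            exact h2
          · simp [Set.mem_symmDiff, heb] at h2 ⊢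
            by_cases hex : e ∈ x <;> simp [hex] at h2 <;> tauto
        have haZ : a ∈ Z := hZQ ▸ Or.inl haQ
        have hbZ : b ∈ Z := hZQ ▸ Or.inr rfl
        exact noub Z hZX ⟨prime_cause hInt ⟨hpP, yp, hyp, hdp⟩ hZX haZ,
          prime_cause hInt ⟨hqP, yq, hyq, hdq⟩ hZX hbZ⟩
    -- conclude p' ⊆ q'
    have ht : q' ∩ p' ∈ symres x X := hDint q' hq'P.1 p' hp'P.1
    have := prime_min hp'P hyp' hdp' ht Set.inter_subset_right ⟨haq', hap'⟩
    exact this.trans Set.inter_subset_left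
  · -- part (ii)
    rintro ⟨hpx, hqx⟩ ⟨s, hsD, hub, -⟩
    have hp's : p' ⊆ s := hub p' (by simp)
    have hq's : q' ⊆ s := hub q' (by simp)
    have hax : a ∉ x := fun h => hpx (prime_cause hInt ⟨hpP, yp, hyp, hdp⟩ hx h)
    have hbx : b ∉ x := fun h => hqx (prime_cause hInt ⟨hqP, yq, hyq, hdq⟩ hx h)
    obtain ⟨S, hSX, rfl⟩ := hsD
    have haS : a ∈ S := by
      rcases Set.mem_symmDiff.1 (hp's hap') with ⟨h1, _⟩ | ⟨h1, _⟩
      · exact h1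
      · exact absurd h1 hax
    have hbS : b ∈ S := by
      rcases Set.mem_symmDiff.1 (hq's hbq') with ⟨h1, _⟩ | ⟨h1, _⟩
      · exact h1
      · exact absurd h1 hbx
    exact noub S hSX ⟨prime_cause hInt ⟨hpP, yp, hyp, hdp⟩ hSX haS,
      prime_cause hInt ⟨hqP, yq, hyq, hdq⟩ hSX hbS⟩
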